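/- arXiv:1504.05885 — 5 statements merged into one kernel-verified Lean document; each statement's English description precedes it below -/
import Mathlib

section
/- Let μ ∈ ℝ, 0 < T_c ≤ T, κ > 0, V : ℝ³ → ℝ, and let α_* ∈ L²(ℝ³) with ‖α_*‖₂ = 1 be such that the quadratic form Q_{T_c}(φ) = ∫ K_{T_c}(k)|φ̂(k)|² d³k + ∫ V(x)|φ(x)|² d³x satisfies Q_{T_c}(α_*) = 0, the associated sesquilinear form satisfies B_{T_c}(α_*, φ) = 0 for all φ, and Q_{T_c}(φ) ≥ κ ‖φ − ⟨α_*, φ⟩ α_*‖₂² for all φ in the form domain. Let h > 0, C₀ > 0, and suppose α ∈ L²(ℝ³) and measurable γ : ℝ³ → ℝ satisfy ∫ K_T(k)|α̂(k)|² d³k + ∫ V(x)|α(x)|² d³x + ∫ K_T(k)(γ(k) − γ_n(k))² d³k ≤ C₀ h⁴. Then ξ = α − ⟨α_*, α⟩ α_* satisfies ‖ξ‖₂² ≤ C₀ h⁴ / κ, and ‖γ − γ_n‖₂² ≤ C₀ h⁴ / (2T). -/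
/-!
Because `tanh` is increasing and `tanh t ≤ t` for `t ≥ 0`, the symbol satisfies
`2T ≤ K_T` and `K_{T_c} ≤ K_T`. The latter puts `α` in the form domain of `Q_{T_c}` with
`Q_{T_c}(α) ≤ Q_T(α)`. The gap inequality gives `κ ‖ξ‖² ≤ Q_{T_c}(α)`, in particular
`Q_{T_c}(α) ≥ 0`, so both `Q_T(α)` and `∫ K_T (γ - γ_n)²` are at most `C₀ h⁴`; with
`K_T ≥ 2T` the second becomes the bound on `‖γ - γ_n‖₂²`.
-/

open MeasureTheory Complex
open scoped FourierTransform

noncomputable section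

/-- The symbol `K_{T'}(k) = (|k|² - μ)/tanh((|k|² - μ)/(2T'))`, with value `2T'` on the
Fermi sphere `|k|² = μ`. -/
def Ksymb (μ T' : ℝ) (k : EuclideanSpace ℝ (Fin 3)) : ℝ :=
  if ‖k‖ ^ 2 = μ then 2 * T'
  else (‖k‖ ^ 2 - μ) / Real.tanh ((‖k‖ ^ 2 - μ) / (2 * T'))

/-- Normal-state momentum distribution at temperature `T` and chemical potential `μ`. -/
def gammaN (μ T : ℝ) (k : EuclideanSpace ℝ (Fin 3)) : ℝ :=
  (1 + Real.exp ((‖k‖ ^ 2 - μ) / T))⁻¹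

/-- The quadratic form `Q_{T'}(φ) = ∫ K_{T'}(k)|φ̂(k)|² dk + ∫ V(x)|φ(x)|² dx`. -/
def Qform (μ T' : ℝ) (V : EuclideanSpace ℝ (Fin 3) → ℝ)
    (φ : EuclideanSpace ℝ (Fin 3) → ℂ) : ℝ :=
  (∫ k, Ksymb μ T' k * ‖𝓕 φ k‖ ^ 2) + ∫ x, V x * ‖φ x‖ ^ 2

/-- The sesquilinear form associated with `Q_{T'}`. -/
def Bform (μ T' : ℝ) (V : EuclideanSpace ℝ (Fin 3) → ℝ)
    (f φ : EuclideanSpace ℝ (Fin 3) → ℂ) : ℂ :=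
  (∫ k, (Ksymb μ T' k : ℂ) * (starRingEnd ℂ) (𝓕 f k) * 𝓕 φ k) +
    ∫ x, (V x : ℂ) * (starRingEnd ℂ) (f x) * φ x

/-- The form domain of `K_{T'}(-i∇) + V`: square-integrable `φ` for which both pieces of
the quadratic form are finite. -/
def InFormDomain (μ T' : ℝ) (V : EuclideanSpace ℝ (Fin 3) → ℝ)
    (φ : EuclideanSpace ℝ (Fin 3) → ℂ) : Prop :=
  MemLp φ 2 volume ∧ Integrable (fun k => Ksymb μ T' k * ‖𝓕 φ k‖ ^ 2) ∧
    Integrable (fun x => V x * ‖φ x‖ ^ 2)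

namespace Real

theorem continuous_tanh : Continuous tanh := by
  simp only [funext tanh_eq_sinh_div_cosh]
  exact continuous_sinh.div continuous_cosh fun x => (cosh_pos x).ne'

theorem tanh_pos_of_pos {t : ℝ} (ht : 0 < t) : 0 < tanh t := by
  rw [tanh_eq_sinh_div_cosh]
  exact div_pos (sinh_pos_iff.mpr ht) (cosh_pos t)

theorem monotone_tanh : Monotone tanh := by
  intro a b hab
  have h := sinh_nonpos_iff.mpr (sub_nonpos.mpr hab)
  rw [sinh_sub] at h
  rw [tanh_eq_sinh_div_cosh, tanh_eq_sinh_div_cosh, div_le_div_iff₀ (cosh_pos a) (cosh_pos b)]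
  linarith

theorem sinh_le_mul_cosh {t : ℝ} (ht : 0 ≤ t) : sinh t ≤ t * cosh t := by
  have hderiv (x : ℝ) : HasDerivAt (fun x => x * cosh x - sinh x) (x * sinh x) x :=
    (((hasDerivAt_id' x).mul (hasDerivAt_cosh x)).sub (hasDerivAt_sinh x)).congr_deriv
      (by ring)
  have hmono : MonotoneOn (fun x => x * cosh x - sinh x) (Set.Ici 0) :=
    monotoneOn_of_hasDerivWithinAt_nonneg (convex_Ici 0) (by fun_prop)
      (fun x _ => (hderiv x).hasDerivWithinAt)
      (fun x hx => mul_nonneg (interior_subset hx) (sinh_nonneg_iff.mpr (interior_subset hx)))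
  simpa using hmono Set.self_mem_Ici ht ht

theorem tanh_le_self {t : ℝ} (ht : 0 ≤ t) : tanh t ≤ t := by
  rw [tanh_eq_sinh_div_cosh, div_le_iff₀ (cosh_pos t)]
  exact sinh_le_mul_cosh ht

theorem div_tanh_div_abs (x c : ℝ) : x / tanh (x / c) = |x| / tanh (|x| / c) := by
  rcases abs_cases x with ⟨hx, -⟩ | ⟨hx, -⟩
  · rw [hx]
  · rw [hx, neg_div c x, tanh_neg, neg_div_neg_eq]

theorem two_mul_le_div_tanh_div {T x : ℝ} (hT : 0 < T) (hx : x ≠ 0) :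
    2 * T ≤ x / tanh (x / (2 * T)) := by
  rw [div_tanh_div_abs]
  have hx' : 0 < |x| := abs_pos.mpr hx
  rw [le_div_iff₀ (tanh_pos_of_pos (by positivity))]
  calc 2 * T * tanh (|x| / (2 * T)) ≤ 2 * T * (|x| / (2 * T)) := by
        gcongr; exact tanh_le_self (by positivity)
    _ = |x| := by field_simp

theorem div_tanh_div_le_div_tanh_div {Tc T x : ℝ} (hTc : 0 < Tc) (hTcT : Tc ≤ T) :
    x / tanh (x / (2 * Tc)) ≤ x / tanh (x / (2 * T)) := by
  rw [div_tanh_div_abs x, div_tanh_div_abs x]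
  rcases (abs_nonneg x).eq_or_lt with hx | hx
  · simp [← hx]
  · have hT : 0 < T := hTc.trans_le hTcT
    gcongr
    · exact tanh_pos_of_pos (by positivity)
    · exact monotone_tanh (by gcongr)

end Real

theorem MeasureTheory.Integrable.mul_of_abs_le {X : Type*} [MeasurableSpace X] {ν : Measure X}
    {a b f : X → ℝ} (hbf : Integrable (fun x => b x * f x) ν) (ha : Measurable a)
    (hb : Measurable b) (hab : ∀ x, |a x| ≤ |b x|) : Integrable (fun x => a x * f x) ν := by
  have hfactor : (fun x => a x * f x) = fun x => a x / b x * (b x * f x) := by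
    funext x
    rcases eq_or_ne (b x) 0 with hbx | hbx
    · have hax : a x = 0 := abs_nonpos_iff.mp (by simpa [hbx] using hab x)
      simp [hax, hbx]
    · field_simp
  rw [hfactor]
  refine hbf.bdd_mul (c := 1) (ha.div hb).aestronglyMeasurable (Filter.Eventually.of_forall ?_)
  intro x
  rw [Real.norm_eq_abs, abs_div]
  exact div_le_one_of_le₀ (hab x) (abs_nonneg _)

section

variable {μ Tc T : ℝ}

theorem two_mul_le_Ksymb (hT : 0 < T) (k : EuclideanSpace ℝ (Fin 3)) : 2 * T ≤ Ksymb μ T k := by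
  unfold Ksymb
  split_ifs with hk
  · rfl
  · exact Real.two_mul_le_div_tanh_div hT (sub_ne_zero.mpr hk)

theorem Ksymb_pos (hT : 0 < T) (k : EuclideanSpace ℝ (Fin 3)) : 0 < Ksymb μ T k :=
  (by positivity : (0 : ℝ) < 2 * T).trans_le (two_mul_le_Ksymb hT k)

theorem Ksymb_le_Ksymb (hTc : 0 < Tc) (hTcT : Tc ≤ T) (k : EuclideanSpace ℝ (Fin 3)) :
    Ksymb μ Tc k ≤ Ksymb μ T k := by
  unfold Ksymb
  split_ifs
  · linarith
  · exact Real.div_tanh_div_le_div_tanh_div hTc hTcT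

theorem measurable_Ksymb (μ T : ℝ) : Measurable (Ksymb μ T) := by
  have := Real.continuous_tanh.measurable
  unfold Ksymb
  refine Measurable.ite (measurableSet_eq_fun (by fun_prop) measurable_const) measurable_const ?_
  fun_prop

variable {V : EuclideanSpace ℝ (Fin 3) → ℝ} {φ : EuclideanSpace ℝ (Fin 3) → ℂ}

theorem InFormDomain.mono (hTc : 0 < Tc) (hTcT : Tc ≤ T) (hφ : InFormDomain μ T V φ) :
    InFormDomain μ Tc V φ := by
  obtain ⟨hL2, hkin, hpot⟩ := hφ
  refine ⟨hL2, hkin.mul_of_abs_le (measurable_Ksymb μ Tc) (measurable_Ksymb μ T) fun k => ?_, hpot⟩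
  rw [abs_of_pos (Ksymb_pos hTc k), abs_of_pos (Ksymb_pos (hTc.trans_le hTcT) k)]
  exact Ksymb_le_Ksymb hTc hTcT k

theorem Qform_le_Qform (hTc : 0 < Tc) (hTcT : Tc ≤ T)
    (hφ : Integrable fun k => Ksymb μ T k * ‖𝓕 φ k‖ ^ 2) : Qform μ Tc V φ ≤ Qform μ T V φ := by
  refine add_le_add_left (integral_mono_of_nonneg (Filter.Eventually.of_forall fun k => ?_) hφ
    (Filter.Eventually.of_forall fun k => ?_)) _
  · exact mul_nonneg (Ksymb_pos hTc k).le (sq_nonneg _)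
  · exact mul_le_mul_of_nonneg_right (Ksymb_le_Ksymb hTc hTcT k) (sq_nonneg _)

theorem two_mul_integral_le_integral_Ksymb_mul (hT : 0 < T) {f : EuclideanSpace ℝ (Fin 3) → ℝ}
    (hf : 0 ≤ f) (hKf : Integrable fun k => Ksymb μ T k * f k) :
    2 * T * ∫ k, f k ≤ ∫ k, Ksymb μ T k * f k := by
  rw [← integral_const_mul]
  refine integral_mono_of_nonneg (Filter.Eventually.of_forall fun k => ?_) hKf
    (Filter.Eventually.of_forall fun k => ?_)
  · exact mul_nonneg (by positivity) (hf k)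
  · exact mul_le_mul_of_nonneg_right (two_mul_le_Ksymb hT k) (hf k)

end

theorem apriori_bounds_from_energy_general
    (μ Tc T κ h C₀ : ℝ) (hTc : 0 < Tc) (hTcT : Tc ≤ T) (hκ : 0 < κ)
    (V : EuclideanSpace ℝ (Fin 3) → ℝ)
    (αstar : EuclideanSpace ℝ (Fin 3) → ℂ)
    (hgap : ∀ φ, InFormDomain μ Tc V φ →
      κ * ∫ x, ‖φ x - (∫ y, (starRingEnd ℂ) (αstar y) * φ y) • αstar x‖ ^ 2 ≤
        Qform μ Tc V φ)
    (α : EuclideanSpace ℝ (Fin 3) → ℂ) (γ : EuclideanSpace ℝ (Fin 3) → ℝ)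
    (hα : MemLp α 2 volume)
    (hint1 : Integrable (fun k => Ksymb μ T k * ‖𝓕 α k‖ ^ 2))
    (hint2 : Integrable (fun x => V x * ‖α x‖ ^ 2))
    (hint3 : Integrable (fun k => Ksymb μ T k * (γ k - gammaN μ T k) ^ 2))
    (henergy : (∫ k, Ksymb μ T k * ‖𝓕 α k‖ ^ 2) + (∫ x, V x * ‖α x‖ ^ 2) +
        (∫ k, Ksymb μ T k * (γ k - gammaN μ T k) ^ 2) ≤ C₀ * h ^ 4) :
    (∫ x, ‖α x - (∫ y, (starRingEnd ℂ) (αstar y) * α y) • αstar x‖ ^ 2) ≤ C₀ * h ^ 4 / κ ∧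
      (∫ k, (γ k - gammaN μ T k) ^ 2) ≤ C₀ * h ^ 4 / (2 * T) := by
  have hT : 0 < T := hTc.trans_le hTcT
  have hgapα := hgap α (InFormDomain.mono hTc hTcT ⟨hα, hint1, hint2⟩)
  have hQ : Qform μ Tc V α ≤ Qform μ T V α := Qform_le_Qform hTc hTcT hint1
  have hξ : 0 ≤ ∫ x, ‖α x - (∫ y, (starRingEnd ℂ) (αstar y) * α y) • αstar x‖ ^ 2 :=
    integral_nonneg fun x => sq_nonneg _
  have hKγ : 0 ≤ ∫ k, Ksymb μ T k * (γ k - gammaN μ T k) ^ 2 :=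
    integral_nonneg fun k => mul_nonneg (Ksymb_pos hT k).le (sq_nonneg _)
  have hγL2 := two_mul_integral_le_integral_Ksymb_mul hT (fun k => sq_nonneg _) hint3
  have henergy' : Qform μ T V α + ∫ k, Ksymb μ T k * (γ k - gammaN μ T k) ^ 2 ≤ C₀ * h ^ 4 :=
    henergy
  constructor
  · rw [le_div_iff₀ hκ]
    linarith
  · rw [le_div_iff₀ (by positivity)]
    linarith [mul_nonneg hκ.le hξ]

/-- A priori bounds: if the energy expression is at most `C₀ h⁴`, then the part of `α`
orthogonal to `α_*` and the deviation `γ - γ_n` are small in `L²`. -/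
theorem apriori_bounds_from_energy
    (μ Tc T κ h C₀ : ℝ) (hTc : 0 < Tc) (hTcT : Tc ≤ T) (hκ : 0 < κ)
    (hh : 0 < h) (hC₀ : 0 < C₀)
    (V : EuclideanSpace ℝ (Fin 3) → ℝ)
    (αstar : EuclideanSpace ℝ (Fin 3) → ℂ)
    (hαstarL2 : MemLp αstar 2 volume) (hαstarnorm : (∫ x, ‖αstar x‖ ^ 2) = 1)
    (hQ0 : Qform μ Tc V αstar = 0)
    (hB : ∀ φ, InFormDomain μ Tc V φ → Bform μ Tc V αstar φ = 0)
    (hgap : ∀ φ, InFormDomain μ Tc V φ →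
      κ * ∫ x, ‖φ x - (∫ y, (starRingEnd ℂ) (αstar y) * φ y) • αstar x‖ ^ 2 ≤
        Qform μ Tc V φ)
    (α : EuclideanSpace ℝ (Fin 3) → ℂ) (γ : EuclideanSpace ℝ (Fin 3) → ℝ)
    (hα : MemLp α 2 volume) (hγ : Measurable γ)
    (hint1 : Integrable (fun k => Ksymb μ T k * ‖𝓕 α k‖ ^ 2))
    (hint2 : Integrable (fun x => V x * ‖α x‖ ^ 2))
    (hint3 : Integrable (fun k => Ksymb μ T k * (γ k - gammaN μ T k) ^ 2))
    (henergy : (∫ k, Ksymb μ T k * ‖𝓕 α k‖ ^ 2) + (∫ x, V x * ‖α x‖ ^ 2) +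
        (∫ k, Ksymb μ T k * (γ k - gammaN μ T k) ^ 2) ≤ C₀ * h ^ 4) :
    (∫ x, ‖α x - (∫ y, (starRingEnd ℂ) (αstar y) * α y) • αstar x‖ ^ 2) ≤ C₀ * h ^ 4 / κ ∧
      (∫ k, (γ k - gammaN μ T k) ^ 2) ≤ C₀ * h ^ 4 / (2 * T) :=
  apriori_bounds_from_energy_general μ Tc T κ h C₀ hTc hTcT hκ V αstar hgap α γ hα hint1 hint2 hint3
    henergy

end
end

section
/- Let e : ℝ → ℝ and Δ : ℝ → ℂ, and let γ : ℝ → ℝ and a : ℝ → ℂ be differentiable functions satisfying, for all t ∈ ℝ, i γ'(t) = Δ(t) conj(a(t)) − conj(Δ(t)) a(t) and i a'(t) = 2 e(t) a(t) + Δ(t)(1 − 2γ(t)). Then the quantity s(t) = √((γ(t) − 1/2)² + |a(t)|²) is constant in t. -/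
open Complex ComplexConjugate

/-! The BdG flow is a rotation of the Bloch vector `(γ - 1/2, Re a, Im a)` (the traceless part
of `Γ_t(k)`) about the axis `(e, Re Δ, Im Δ)`, so its length `s` is conserved: the two component
equations make the time derivative of `(γ - 1/2)² + ‖a‖²` vanish identically. -/

theorem bdg_radial_velocity_eq_zero {e g g' : ℝ} {Δ z z' : ℂ}
    (h₁ : I * (g' : ℂ) = Δ * conj z - conj Δ * z)
    (h₂ : I * z' = 2 * (e : ℂ) * z + Δ * (1 - 2 * (g : ℂ))) :
    (g - 1 / 2) * g' + inner ℝ z z' = 0 := by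
  rw [Complex.inner]
  obtain ⟨h₁re, h₁im⟩ := Complex.ext_iff.mp h₁
  obtain ⟨h₂re, h₂im⟩ := Complex.ext_iff.mp h₂
  simp only [mul_re, mul_im, sub_re, sub_im, add_re, add_im, I_re, I_im, ofReal_re, ofReal_im,
    conj_re, conj_im, one_re, one_im, re_ofNat, im_ofNat] at h₁re h₁im h₂re h₂im ⊢
  linear_combination (g - 1 / 2) * h₁im - z.im * h₂re + z.re * h₂im

theorem hasDerivAt_sub_sq_add_norm_sq {F : Type*} [NormedAddCommGroup F] [InnerProductSpace ℝ F]
    {γ : ℝ → ℝ} {a : ℝ → F} {γ' c t : ℝ} {a' : F}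
    (hγ : HasDerivAt γ γ' t) (ha : HasDerivAt a a' t) :
    HasDerivAt (fun s => (γ s - c) ^ 2 + ‖a s‖ ^ 2) (2 * ((γ t - c) * γ' + inner ℝ (a t) a')) t := by
  refine (((hγ.sub_const c).fun_pow 2).fun_add ha.norm_sq).congr_deriv ?_
  push_cast
  ring

/-- For the component form of the time-dependent Bogoliubov–de-Gennes equation at a fixed
momentum, `i γ' = Δ conj(a) - conj(Δ) a` and `i a' = 2 e a + Δ (1 - 2γ)`, the quantity
`s(t) = √((γ(t) - 1/2)² + |a(t)|²)` is constant in time. -/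
theorem bdg_component_eigenvalue_conserved
    (e : ℝ → ℝ) (Δ : ℝ → ℂ) (γ γ' : ℝ → ℝ) (a a' : ℝ → ℂ)
    (hγ : ∀ t : ℝ, HasDerivAt γ (γ' t) t)
    (ha : ∀ t : ℝ, HasDerivAt a (a' t) t)
    (heq1 : ∀ t : ℝ, Complex.I * (γ' t : ℂ) =
      Δ t * (starRingEnd ℂ) (a t) - (starRingEnd ℂ) (Δ t) * a t)
    (heq2 : ∀ t : ℝ, Complex.I * a' t = 2 * (e t : ℂ) * a t + Δ t * (1 - 2 * (γ t : ℂ))) :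
    ∀ t : ℝ, Real.sqrt ((γ t - 1 / 2) ^ 2 + ‖a t‖ ^ 2) =
      Real.sqrt ((γ 0 - 1 / 2) ^ 2 + ‖a 0‖ ^ 2) := by
  have hderiv (t : ℝ) : HasDerivAt (fun s => (γ s - 1 / 2) ^ 2 + ‖a s‖ ^ 2) 0 t := by
    simpa only [bdg_radial_velocity_eq_zero (heq1 t) (heq2 t), mul_zero] using
      hasDerivAt_sub_sq_add_norm_sq (c := 1 / 2) (hγ t) (ha t)
  intro t
  congr 1
  exact is_const_of_deriv_eq_zero (fun s => (hderiv s).differentiableAt)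
    (fun s => (hderiv s).deriv) t 0
end

section
/- Let H : ℝ → M₂(ℂ), and let Γ : ℝ → M₂(ℂ) be differentiable with i Γ'(t) = H(t) Γ(t) − Γ(t) H(t) for all t ∈ ℝ, such that Γ(t) is Hermitian for every t. If Γ(0) and 1 − Γ(0) are positive semidefinite, then Γ(t) and 1 − Γ(t) are positive semidefinite for all t ∈ ℝ. -/
/-!
The evolution is isospectral: `Γ'` is (up to the factor `-i`) the commutator `[H, Γ]`, whose trace
vanishes, and so does the trace of `Γ [H, Γ]`. Hence `tr Γ` and, for `2 × 2` matrices,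
`det Γ` have zero derivative, so the characteristic polynomial and with it the spectrum of `Γ(t)`
do not depend on `t`. For a Hermitian matrix, `0 ≤ Γ` and `0 ≤ 1 - Γ` are conditions on the
spectrum alone.
-/

open scoped ComplexOrder

attribute [local instance] Matrix.normedAddCommGroup Matrix.normedSpace

namespace Matrix

variable {n R : Type*} [Fintype n]

theorem trace_commutator [CommRing R] (A B : Matrix n n R) : (A * B - B * A).trace = 0 := by
  rw [trace_sub, trace_mul_comm, sub_self]

theorem trace_mul_commutator_self [CommRing R] (A B : Matrix n n R) :
    (A * (B * A - A * B)).trace = 0 := by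
  rw [Matrix.mul_sub, trace_sub, ← Matrix.mul_assoc, trace_mul_comm (A * B) A, sub_self]

theorem trace_eq_zero_of_smul_eq_commutator [Field R] {c : R} (hc : c ≠ 0)
    {A B X : Matrix n n R} (h : c • X = A * B - B * A) : X.trace = 0 :=
  (smul_eq_zero.1 (by rw [← trace_smul, h, trace_commutator])).resolve_left hc

theorem trace_mul_eq_zero_of_smul_eq_commutator [Field R] {c : R} (hc : c ≠ 0)
    {A B X : Matrix n n R} (h : c • X = A * B - B * A) : (B * X).trace = 0 :=
  (smul_eq_zero.1 (by rw [← trace_smul, ← Matrix.mul_smul, h, trace_mul_commutator_self])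
    ).resolve_left hc

variable [DecidableEq n]

theorem spectrum_eq_of_charpoly_eq [CommRing R] {A B : Matrix n n R}
    (h : A.charpoly = B.charpoly) : spectrum R A = spectrum R B := by
  ext r
  simp only [mem_spectrum_iff_not_isUnit_eval_charpoly, h]

theorem spectrum_one_sub_eq_of_spectrum_eq [CommRing R] {A B : Matrix n n R}
    (h : spectrum R A = spectrum R B) : spectrum R (1 - A) = spectrum R (1 - B) := by
  rw [← map_one (algebraMap R (Matrix n n R)), ← spectrum.singleton_sub_eq,
    ← spectrum.singleton_sub_eq, h]

theorem IsHermitian.posSemidef_iff_of_spectrum_eq {𝕜 : Type*} [RCLike 𝕜] {A B : Matrix n n 𝕜}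
    (hA : A.IsHermitian) (hB : B.IsHermitian) (h : spectrum 𝕜 A = spectrum 𝕜 B) :
    A.PosSemidef ↔ B.PosSemidef := by
  simp only [posSemidef_iff_isHermitian_and_spectrum_nonneg, hA, hB, h, true_and]

end Matrix

section Deriv

variable {n 𝕜 : Type*} [Fintype n] [RCLike 𝕜] {t : ℝ}

theorem HasDerivAt.matrix_apply {Γ : ℝ → Matrix n n 𝕜} {Γ' : Matrix n n 𝕜}
    (h : HasDerivAt Γ Γ' t) (i j : n) : HasDerivAt (fun s => Γ s i j) (Γ' i j) t :=
  hasDerivAt_pi.1 (hasDerivAt_pi.1 h i) j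

theorem HasDerivAt.matrix_trace {Γ : ℝ → Matrix n n 𝕜} {Γ' : Matrix n n 𝕜}
    (h : HasDerivAt Γ Γ' t) : HasDerivAt (fun s => (Γ s).trace) Γ'.trace t :=
  HasDerivAt.fun_sum fun i _ => h.matrix_apply i i

/-- Jacobi's formula `(det Γ)' = tr (adj Γ * Γ')`, with `adj Γ = tr Γ - Γ` in dimension two. -/
theorem HasDerivAt.matrix_det_fin_two {Γ : ℝ → Matrix (Fin 2) (Fin 2) 𝕜}
    {Γ' : Matrix (Fin 2) (Fin 2) 𝕜} (h : HasDerivAt Γ Γ' t) :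
    HasDerivAt (fun s => (Γ s).det) ((Γ t).trace * Γ'.trace - (Γ t * Γ').trace) t := by
  simp only [Matrix.det_fin_two]
  refine (((h.matrix_apply 0 0).fun_mul (h.matrix_apply 1 1)).fun_sub
    ((h.matrix_apply 0 1).fun_mul (h.matrix_apply 1 0))).congr_deriv ?_
  simp only [Matrix.trace_fin_two, Matrix.mul_apply, Fin.sum_univ_two]
  ring

end Deriv

theorem is_const_of_hasDerivAt_zero {𝕜 G : Type*} [RCLike 𝕜] [NormedAddCommGroup G]
    [NormedSpace 𝕜 G] {f : 𝕜 → G} (hf : ∀ t, HasDerivAt f 0 t) (x y : 𝕜) : f x = f y :=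
  is_const_of_deriv_eq_zero (fun t => (hf t).differentiableAt) (fun t => (hf t).deriv) x y

/-- If `t ↦ Γ(t)` is a differentiable family of Hermitian `2 × 2` complex matrices satisfying
the Bogoliubov–de-Gennes type equation `i Γ'(t) = H(t) Γ(t) - Γ(t) H(t)`, and if
`0 ≤ Γ(0) ≤ 1`, then `0 ≤ Γ(t) ≤ 1` for all times `t`. -/
theorem posSemidef_conserved_of_BdG
    (H Γ Γ' : ℝ → Matrix (Fin 2) (Fin 2) ℂ)
    (hderiv : ∀ t : ℝ, HasDerivAt Γ (Γ' t) t)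
    (heq : ∀ t : ℝ, Complex.I • Γ' t = H t * Γ t - Γ t * H t)
    (hherm : ∀ t : ℝ, (Γ t).IsHermitian)
    (hpos : (Γ 0).PosSemidef) (hpos' : (1 - Γ 0).PosSemidef) :
    ∀ t : ℝ, (Γ t).PosSemidef ∧ (1 - Γ t).PosSemidef := by
  have htrace_deriv t := Matrix.trace_eq_zero_of_smul_eq_commutator Complex.I_ne_zero (heq t)
  have htrace_mul_deriv t :=
    Matrix.trace_mul_eq_zero_of_smul_eq_commutator Complex.I_ne_zero (heq t)
  have htrace t : (Γ t).trace = (Γ 0).trace :=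
    is_const_of_hasDerivAt_zero
      (fun s => (hderiv s).matrix_trace.congr_deriv (htrace_deriv s)) t 0
  have hdet t : (Γ t).det = (Γ 0).det :=
    is_const_of_hasDerivAt_zero (fun s => (hderiv s).matrix_det_fin_two.congr_deriv
      (by rw [htrace_deriv s, htrace_mul_deriv s, mul_zero, sub_zero])) t 0
  intro t
  have hspec : spectrum ℂ (Γ t) = spectrum ℂ (Γ 0) := Matrix.spectrum_eq_of_charpoly_eq <| by
    rw [Matrix.charpoly_fin_two, Matrix.charpoly_fin_two, htrace t, hdet t]
  have hherm_one_sub t : (1 - Γ t).IsHermitian := Matrix.isHermitian_one.sub (hherm t)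
  exact ⟨((hherm t).posSemidef_iff_of_spectrum_eq (hherm 0) hspec).2 hpos,
    ((hherm_one_sub t).posSemidef_iff_of_spectrum_eq (hherm_one_sub 0)
      (Matrix.spectrum_one_sub_eq_of_spectrum_eq hspec)).2 hpos'⟩
end

section
/- For every real x ≠ 0 and all temperatures 0 < T' ≤ T, one has x/tanh(x/(2T)) − x/tanh(x/(2T')) ≤ 2(T − T'). In particular, for T < T_c one has K_T(x) ≥ K_{T_c}(x) − 2(T_c − T) for all x ≠ 0. -/
/-! Write `x / tanh (x / (2T)) = 2T + x · L(x / (2T))` with the Langevin function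
`L u = coth u - 1/u`. Since `L' u = 1/u² - 1/sinh² u ≥ 0` (because `|u| ≤ |sinh u|`), `L` is
increasing on `(0, ∞)`; being odd, `x · L(x / (2T)) = |x| · L(|x| / (2T))` is then antitone in
`T > 0`, which is the claim. -/

open Real Set

noncomputable def langevin (u : ℝ) : ℝ := cosh u / sinh u - u⁻¹

lemma langevin_neg (u : ℝ) : langevin (-u) = -langevin u := by
  simp only [langevin, cosh_neg, sinh_neg, div_neg, inv_neg]
  ring

lemma hasDerivAt_langevin {u : ℝ} (hu : u ≠ 0) :
    HasDerivAt langevin ((u ^ 2)⁻¹ - (sinh u ^ 2)⁻¹) u := by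
  have hs : sinh u ≠ 0 := sinh_ne_zero.2 hu
  have h : HasDerivAt langevin _ u :=
    ((hasDerivAt_cosh u).div (hasDerivAt_sinh u) hs).sub (hasDerivAt_inv hu)
  refine h.congr_deriv ?_
  field_simp
  linear_combination -u ^ 2 * cosh_sq_sub_sinh_sq u

lemma sq_le_sinh_sq (u : ℝ) : u ^ 2 ≤ sinh u ^ 2 := by
  rw [← sq_abs u, ← sq_abs (sinh u), abs_sinh]
  exact pow_le_pow_left₀ (abs_nonneg u) (self_le_sinh_iff.2 (abs_nonneg u)) 2

lemma langevin_monotoneOn : MonotoneOn langevin (Ioi 0) := by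
  refine monotoneOn_of_hasDerivWithinAt_nonneg (f' := fun u => (u ^ 2)⁻¹ - (sinh u ^ 2)⁻¹)
    (convex_Ioi 0)
    (fun u hu => (hasDerivAt_langevin (ne_of_gt hu)).continuousAt.continuousWithinAt)
    (fun u hu => ?_) (fun u hu => ?_) <;>
    rw [interior_Ioi] at hu
  · exact (hasDerivAt_langevin (ne_of_gt hu)).hasDerivWithinAt
  · exact sub_nonneg.2 (inv_anti₀ (pow_pos hu 2) (sq_le_sinh_sq u))

lemma mul_langevin_div_antitoneOn (x : ℝ) :
    AntitoneOn (fun T => x * langevin (x / (2 * T))) (Ioi 0) := by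
  rcases eq_or_ne x 0 with rfl | hx
  · simp [antitoneOn_const]
  have h_abs : ∀ T, x * langevin (x / (2 * T)) = |x| * langevin (|x| / (2 * T)) := by
    intro T
    rcases abs_choice x with h | h <;> rw [h]
    rw [neg_div, langevin_neg]
    ring
  intro T (hT : 0 < T) T' (hT' : 0 < T') hTT'
  have hx' : 0 < |x| := abs_pos.2 hx
  simp only [h_abs]
  gcongr
  refine langevin_monotoneOn (mem_Ioi.2 (by positivity)) (mem_Ioi.2 (by positivity)) ?_
  gcongr

lemma div_tanh_eq_add_mul_langevin {x T : ℝ} (hx : x ≠ 0) (hT : T ≠ 0) :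
    x / tanh (x / (2 * T)) = 2 * T + x * langevin (x / (2 * T)) := by
  rw [langevin, tanh_eq_sinh_div_cosh]
  field_simp
  ring

/-- Lipschitz bound (with constant 2) in the temperature for the symbol
`K_T(x) = x / tanh(x / (2T))`:  for `0 < T' ≤ T` one has `K_T(x) - K_{T'}(x) ≤ 2 (T - T')`. -/
theorem K_symbol_lipschitz_in_temperature
    (x T T' : ℝ) (hx : x ≠ 0) (hT' : 0 < T') (hTT' : T' ≤ T) :
    x / Real.tanh (x / (2 * T)) - x / Real.tanh (x / (2 * T')) ≤ 2 * (T - T') := by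
  have hT : 0 < T := hT'.trans_le hTT'
  have h_anti := mul_langevin_div_antitoneOn x (mem_Ioi.2 hT') (mem_Ioi.2 hT) hTT'
  rw [div_tanh_eq_add_mul_langevin hx hT.ne', div_tanh_eq_add_mul_langevin hx hT'.ne']
  linarith
end

section
/- Let μ > 0 and let f : ℝ³ → ℂ be continuous and bounded with |f(k₀)| > 0 for some k₀ ∈ ℝ³ with |k₀| = √μ. Then there exist c > 0, C > 0 and δ₀ ∈ (0, √μ] such that for all δ ∈ (0, δ₀], all h > 0, M ≥ 1, all ψ, ψ₀ ∈ ℂ with |ψ| ≤ M and |ψ₀| ≤ M, and all ξ, ξ₀ ∈ L²(ℝ³) with ‖ξ‖₂ ≤ M h² and ‖ξ₀‖₂ ≤ M h², one has ∫_{Ω_δ} | |hψ f(k) + ξ(k)|² − |hψ₀ f(k) + ξ₀(k)|² | d³k ≥ c h² δ · | |ψ|² − |ψ₀|² | − C M² (h³ δ^{1/2} + h⁴). -/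
/-!
Pointwise, `|‖a + b‖² - ‖a₀ + b₀‖²| ≥ |‖a‖² - ‖a₀‖²| - (2‖a‖‖b‖ + ‖b‖²) - (2‖a₀‖‖b₀‖ + ‖b₀‖²)`.
With `a = hψ f`, `a₀ = hψ₀ f` the main term integrates to `h² ||ψ|² - |ψ₀|²| ∫_{Ω_δ} |f|²`, while
by Cauchy–Schwarz and `|Ω_δ| ≲ δ` the errors are `O(M² h³ δ^{1/2})` and `O(M² h⁴)`.

It remains to see `∫_{Ω_δ} |f|² ≳ δ`. Near `k₀` we have `|f| ≥ |f(k₀)|/2`, and for small `δ` the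
part of `Ω_δ` in a thin cone around the ray through `k₀` lies in that neighbourhood. Dilations
preserve the cone, so its truncation at radius `r` has volume `r³` times that at radius `1`; the
slice between radii `√μ - δ` and `√μ` therefore has volume `≍ δ`.
-/

open MeasureTheory

/-- The annulus of thickness `δ` around the Fermi sphere `{|k| = √μ}` in `ℝ³`. -/
def fermiAnnulus (μ δ : ℝ) : Set (EuclideanSpace ℝ (Fin 3)) :=
  {k | |‖k‖ - Real.sqrt μ| ≤ δ}

open Metric Set Module
open scoped Pointwise

section NormSq

variable {E : Type*} [SeminormedAddCommGroup E]

lemma abs_norm_add_sq_sub_norm_sq_le (x y : E) :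
    |‖x + y‖ ^ 2 - ‖x‖ ^ 2| ≤ 2 * ‖x‖ * ‖y‖ + ‖y‖ ^ 2 := by
  have hup := norm_add_le x y
  have hlow : |‖x‖ - ‖y‖| ≤ ‖x + y‖ := by simpa using abs_norm_sub_norm_le x (-y)
  have hlow' : (‖x‖ - ‖y‖) ^ 2 ≤ ‖x + y‖ ^ 2 := by
    rw [← sq_abs]; exact pow_le_pow_left₀ (abs_nonneg _) hlow 2
  rw [abs_le]
  constructor <;> nlinarith [norm_nonneg x, norm_nonneg y, norm_nonneg (x + y)]

lemma abs_norm_add_sq_sub_norm_add_sq_ge {a a₀ b b₀ : E} {A : ℝ} (ha : ‖a‖ ≤ A)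
    (ha₀ : ‖a₀‖ ≤ A) :
    |‖a‖ ^ 2 - ‖a₀‖ ^ 2| - 2 * A * (‖b‖ + ‖b₀‖) - (‖b‖ ^ 2 + ‖b₀‖ ^ 2) ≤
      |‖a + b‖ ^ 2 - ‖a₀ + b₀‖ ^ 2| := by
  have hb := abs_norm_add_sq_sub_norm_sq_le a b
  have hb₀ := abs_norm_add_sq_sub_norm_sq_le a₀ b₀
  rw [abs_sub_comm] at hb
  have htri := abs_sub_le (‖a‖ ^ 2) (‖a + b‖ ^ 2) (‖a₀‖ ^ 2)
  have htri' := abs_sub_le (‖a + b‖ ^ 2) (‖a₀ + b₀‖ ^ 2) (‖a₀‖ ^ 2)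
  have hAb : ‖a‖ * ‖b‖ ≤ A * ‖b‖ := mul_le_mul_of_nonneg_right ha (norm_nonneg b)
  have hAb₀ : ‖a₀‖ * ‖b₀‖ ≤ A * ‖b₀‖ := mul_le_mul_of_nonneg_right ha₀ (norm_nonneg b₀)
  linarith

lemma abs_norm_mul_sq_sub_norm_mul_sq {𝕜 : Type*} [NormedDivisionRing 𝕜] (z w x : 𝕜) :
    |‖z * x‖ ^ 2 - ‖w * x‖ ^ 2| = |‖z‖ ^ 2 - ‖w‖ ^ 2| * ‖x‖ ^ 2 := by
  rw [norm_mul, norm_mul, mul_pow, mul_pow, ← sub_mul, abs_mul, abs_of_nonneg (sq_nonneg ‖x‖)]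

end NormSq

section Integral

variable {α F : Type*} [MeasurableSpace α] {μ : Measure α} [NormedAddCommGroup F]

lemma integral_norm_le_sqrt_mul_sqrt [IsFiniteMeasure μ] {f : α → F} (hf : MemLp f 2 μ) :
    ∫ x, ‖f x‖ ∂μ ≤ √(μ.real univ) * √(∫ x, ‖f x‖ ^ 2 ∂μ) := by
  have := integral_mul_le_Lp_mul_Lq_of_nonneg (p := 2) (q := 2) (μ := μ)
    Real.HolderConjugate.two_two (f := fun _ => (1 : ℝ)) (g := fun x => ‖f x‖)
    (ae_of_all _ fun _ => zero_le_one) (ae_of_all _ fun _ => norm_nonneg _)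
    (memLp_const _) (by simpa using hf.norm)
  simpa only [one_mul, one_pow, integral_const, smul_eq_mul, mul_one, Real.rpow_two,
    ← Real.sqrt_eq_rpow] using this

lemma integral_norm_sq_le_of_eLpNorm_le {f : α → F} (hf : MemLp f 2 μ) {m : ℝ} (hm : 0 ≤ m)
    (hfm : eLpNorm f 2 μ ≤ ENNReal.ofReal m) : ∫ x, ‖f x‖ ^ 2 ∂μ ≤ m ^ 2 := by
  have hlp : lpNorm f 2 μ ≤ m := by
    rw [← toReal_eLpNorm hf.aestronglyMeasurable]
    exact ENNReal.toReal_le_of_le_ofReal hm hfm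
  rw [lpNorm_eq_integral_norm_rpow_toReal two_ne_zero ENNReal.ofNat_ne_top
    hf.aestronglyMeasurable] at hlp
  simp only [ENNReal.toReal_ofNat, Real.rpow_two, ← one_div, ← Real.sqrt_eq_rpow] at hlp
  exact (Real.sqrt_le_left hm).mp hlp

lemma setIntegral_norm_sq_le_of_eLpNorm_le {f : α → F} (s : Set α) (hf : MemLp f 2 μ) {m : ℝ}
    (hm : 0 ≤ m) (hfm : eLpNorm f 2 μ ≤ ENNReal.ofReal m) : ∫ x in s, ‖f x‖ ^ 2 ∂μ ≤ m ^ 2 :=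
  integral_norm_sq_le_of_eLpNorm_le (hf.restrict s) hm
    ((eLpNorm_mono_measure _ Measure.restrict_le_self).trans hfm)

lemma setIntegral_norm_le_sqrt_mul_of_eLpNorm_le {f : α → F} {s : Set α} {V m : ℝ} (hV : 0 ≤ V)
    (hs : μ s ≤ ENNReal.ofReal V) (hf : MemLp f 2 μ) (hm : 0 ≤ m)
    (hfm : eLpNorm f 2 μ ≤ ENNReal.ofReal m) : ∫ x in s, ‖f x‖ ∂μ ≤ √V * m := by
  have : IsFiniteMeasure (μ.restrict s) :=
    isFiniteMeasure_restrict.mpr (hs.trans_lt ENNReal.ofReal_lt_top).ne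
  calc _ ≤ √((μ.restrict s).real univ) * √(∫ x in s, ‖f x‖ ^ 2 ∂μ) :=
        integral_norm_le_sqrt_mul_sqrt (hf.restrict s)
    _ ≤ √V * √(m ^ 2) := by
        gcongr
        · rw [measureReal_restrict_apply_univ]
          exact ENNReal.toReal_le_of_le_ofReal hV hs
        · exact setIntegral_norm_sq_le_of_eLpNorm_le s hf hm hfm
    _ = √V * m := by rw [Real.sqrt_sq hm]

lemma integral_abs_norm_add_sq_sub_norm_add_sq_ge [IsFiniteMeasure μ] {a a₀ b b₀ : α → F}
    {A : ℝ} (ha : AEStronglyMeasurable a μ) (ha₀ : AEStronglyMeasurable a₀ μ)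
    (haA : ∀ᵐ x ∂μ, ‖a x‖ ≤ A) (ha₀A : ∀ᵐ x ∂μ, ‖a₀ x‖ ≤ A)
    (hb : MemLp b 2 μ) (hb₀ : MemLp b₀ 2 μ) :
    ∫ x, |‖a x‖ ^ 2 - ‖a₀ x‖ ^ 2| ∂μ - 2 * A * (∫ x, ‖b x‖ ∂μ + ∫ x, ‖b₀ x‖ ∂μ)
        - (∫ x, ‖b x‖ ^ 2 ∂μ + ∫ x, ‖b₀ x‖ ^ 2 ∂μ) ≤
      ∫ x, |‖a x + b x‖ ^ 2 - ‖a₀ x + b₀ x‖ ^ 2| ∂μ := by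
  have hsq : ∀ g : α → F, MemLp g 2 μ → Integrable (fun x => ‖g x‖ ^ 2) μ :=
    fun g hg => (memLp_two_iff_integrable_sq_norm hg.1).mp hg
  have ha2 : MemLp a 2 μ := .of_bound ha A haA
  have ha2₀ : MemLp a₀ 2 μ := .of_bound ha₀ A ha₀A
  have hI : Integrable (fun x => |‖a x‖ ^ 2 - ‖a₀ x‖ ^ 2|) μ :=
    ((hsq _ ha2).sub (hsq _ ha2₀)).abs
  have hb1 := (hb.integrable one_le_two).norm
  have hb1₀ := (hb₀.integrable one_le_two).norm
  have hE := hI.sub ((hb1.add hb1₀).const_mul (2 * A))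
  have hlin : ∫ x, (|‖a x‖ ^ 2 - ‖a₀ x‖ ^ 2| - 2 * A * (‖b x‖ + ‖b₀ x‖)
      - (‖b x‖ ^ 2 + ‖b₀ x‖ ^ 2)) ∂μ = ∫ x, |‖a x‖ ^ 2 - ‖a₀ x‖ ^ 2| ∂μ
      - 2 * A * (∫ x, ‖b x‖ ∂μ + ∫ x, ‖b₀ x‖ ∂μ) - (∫ x, ‖b x‖ ^ 2 ∂μ + ∫ x, ‖b₀ x‖ ^ 2 ∂μ) := by
    rw [integral_sub, integral_sub, integral_const_mul, integral_add, integral_add]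
    exacts [hsq _ hb, hsq _ hb₀, hb1, hb1₀, hI, (hb1.add hb1₀).const_mul _, hE,
      (hsq _ hb).add (hsq _ hb₀)]
  rw [← hlin]
  refine integral_mono_ae (hE.sub ((hsq _ hb).add (hsq _ hb₀)))
    ((hsq _ (ha2.add hb)).sub (hsq _ (ha2₀.add hb₀))).abs ?_
  filter_upwards [haA, ha₀A] with x hx hx₀
  exact abs_norm_add_sq_sub_norm_add_sq_ge hx hx₀

lemma setIntegral_abs_norm_mul_add_sq_sub_norm_mul_add_sq_ge {𝕜 : Type*} [NormedDivisionRing 𝕜]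
    {g b b₀ : α → 𝕜} {z w : 𝕜} {s : Set α} {A B V m : ℝ} (hs : MeasurableSet s) (hV : 0 ≤ V)
    (hμs : μ s ≤ ENNReal.ofReal V) (hg : AEStronglyMeasurable g μ) (hB : 0 ≤ B)
    (hgB : ∀ x ∈ s, ‖g x‖ ≤ B) (hz : ‖z‖ ≤ A) (hw : ‖w‖ ≤ A) (hm : 0 ≤ m) (hb : MemLp b 2 μ)
    (hb₀ : MemLp b₀ 2 μ) (hbm : eLpNorm b 2 μ ≤ ENNReal.ofReal m)
    (hb₀m : eLpNorm b₀ 2 μ ≤ ENNReal.ofReal m) :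
    |‖z‖ ^ 2 - ‖w‖ ^ 2| * ∫ x in s, ‖g x‖ ^ 2 ∂μ - 4 * A * B * √V * m - 2 * m ^ 2 ≤
      ∫ x in s, |‖z * g x + b x‖ ^ 2 - ‖w * g x + b₀ x‖ ^ 2| ∂μ := by
  have : IsFiniteMeasure (μ.restrict s) :=
    isFiniteMeasure_restrict.mpr (hμs.trans_lt ENNReal.ofReal_lt_top).ne
  have hbound : ∀ {u : 𝕜}, ‖u‖ ≤ A → ∀ᵐ x ∂μ.restrict s, ‖u * g x‖ ≤ A * B := fun hu =>
    ae_restrict_of_forall_mem hs fun x hx => by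
      rw [norm_mul]; exact mul_le_mul hu (hgB x hx) (norm_nonneg _) ((norm_nonneg _).trans hu)
  have key := integral_abs_norm_add_sq_sub_norm_add_sq_ge (hg.restrict.const_mul z)
    (hg.restrict.const_mul w) (hbound hz) (hbound hw) (hb.restrict s) (hb₀.restrict s)
  simp only [abs_norm_mul_sq_sub_norm_mul_sq, integral_const_mul] at key
  have herr : 2 * (A * B) * (∫ x in s, ‖b x‖ ∂μ + ∫ x in s, ‖b₀ x‖ ∂μ) ≤
      2 * (A * B) * (2 * (√V * m)) := by
    have := (norm_nonneg z).trans hz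
    gcongr
    linarith [setIntegral_norm_le_sqrt_mul_of_eLpNorm_le hV hμs hb hm hbm,
      setIntegral_norm_le_sqrt_mul_of_eLpNorm_le hV hμs hb₀ hm hb₀m]
  linear_combination key + herr + setIntegral_norm_sq_le_of_eLpNorm_le s hb hm hbm +
    setIntegral_norm_sq_le_of_eLpNorm_le s hb₀ hm hb₀m

end Integral

section Cone

variable {E : Type*} [NormedAddCommGroup E] [NormedSpace ℝ E]

def radialCone (v : E) (η : ℝ) : Set E := {x | ‖(‖v‖ / ‖x‖) • x - v‖ < η}

lemma norm_div_norm_smul_sub_self_le (r : ℝ) (x : E) : ‖(r / ‖x‖) • x - x‖ ≤ |r - ‖x‖| := by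
  rcases eq_or_ne x 0 with rfl | hx
  · simp
  have hx' : ‖x‖ ≠ 0 := norm_ne_zero_iff.mpr hx
  have hsub : (r / ‖x‖) • x - x = (r / ‖x‖ - 1) • x := by rw [sub_smul, one_smul]
  rw [hsub, norm_smul, Real.norm_eq_abs, ← abs_norm x,
    ← abs_mul, abs_norm, sub_mul, div_mul_cancel₀ _ hx', one_mul]

lemma smul_radialCone {s : ℝ} (hs : 0 < s) (v : E) (η : ℝ) :
    s • radialCone v η = radialCone v η := by
  ext x
  rw [mem_smul_set_iff_inv_smul_mem₀ hs.ne']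
  simp only [radialCone, mem_ofPred_eq, norm_smul, Real.norm_eq_abs, abs_inv, abs_of_pos hs,
    smul_smul]
  rcases eq_or_ne ‖x‖ 0 with hx | hx
  · simp [hx]
  · field_simp

lemma ball_subset_radialCone (v : E) (η : ℝ) : ball v (η / 2) ⊆ radialCone v η := fun x hx => by
  rw [mem_ball, dist_eq_norm] at hx
  calc ‖(‖v‖ / ‖x‖) • x - v‖ ≤ ‖(‖v‖ / ‖x‖) • x - x‖ + ‖x - v‖ :=
        norm_sub_le_norm_sub_add_norm_sub _ _ _
    _ ≤ |‖v‖ - ‖x‖| + ‖x - v‖ := by gcongr; exact norm_div_norm_smul_sub_self_le _ _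
    _ < η := by
      have := abs_norm_sub_norm_le x v
      rw [abs_sub_comm] at this
      linarith

lemma radialCone_inter_subset_closedBall (v : E) (η δ : ℝ) :
    radialCone v η ∩ {x | |‖x‖ - ‖v‖| ≤ δ} ⊆ closedBall v (δ + η) := fun x ⟨hxC, hxδ⟩ => by
  rw [mem_closedBall, dist_eq_norm]
  calc ‖x - v‖ ≤ ‖x - (‖v‖ / ‖x‖) • x‖ + ‖(‖v‖ / ‖x‖) • x - v‖ :=
        norm_sub_le_norm_sub_add_norm_sub _ _ _
    _ ≤ |‖v‖ - ‖x‖| + η := by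
      rw [norm_sub_rev]
      exact add_le_add (norm_div_norm_smul_sub_self_le _ _) hxC.le
    _ ≤ δ + η := by rw [abs_sub_comm]; gcongr; exact hxδ

open Measure

variable [MeasurableSpace E] [BorelSpace E]

lemma measurableSet_radialCone (v : E) (η : ℝ) : MeasurableSet (radialCone v η) :=
  measurableSet_lt (by fun_prop) measurable_const

variable [FiniteDimensional ℝ E] (μ : Measure E) [μ.IsAddHaarMeasure]

lemma addHaar_radialCone_inter_closedBall (v : E) (η : ℝ) {s : ℝ} (hs : 0 < s) :
    μ (radialCone v η ∩ closedBall 0 s) =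
      ENNReal.ofReal (s ^ finrank ℝ E) * μ (radialCone v η ∩ closedBall 0 1) := by
  rw [← addHaar_smul_of_nonneg μ hs.le, smul_set_inter₀ hs.ne', smul_radialCone hs,
    _root_.smul_closedBall _ _ zero_le_one, smul_zero, Real.norm_eq_abs, abs_of_pos hs, mul_one]

lemma addHaar_radialCone_inter_closedBall_one_pos (v : E) {η : ℝ} (hη : 0 < η) :
    0 < μ (radialCone v η ∩ closedBall 0 1) := by
  have hsub : ball v (η / 2) ⊆ radialCone v η ∩ closedBall 0 (‖v‖ + η) := by
    refine subset_inter (ball_subset_radialCone v η) fun x hx => ?_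
    rw [mem_ball, dist_eq_norm] at hx
    rw [mem_closedBall, dist_zero_right]
    linarith [norm_le_norm_add_norm_sub' x v]
  have hpos := (measure_ball_pos μ v (half_pos hη)).trans_le (measure_mono hsub)
  rw [addHaar_radialCone_inter_closedBall μ v η (by positivity)] at hpos
  exact pos_of_ne_zero fun h => by simp [h] at hpos

lemma addHaar_radialCone_inter_closedBall_diff (v : E) (η : ℝ) {a b : ℝ} (ha : 0 < a)
    (hab : a ≤ b) :
    μ (radialCone v η ∩ (closedBall 0 b \ closedBall 0 a)) =
      ENNReal.ofReal (b ^ finrank ℝ E - a ^ finrank ℝ E) *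
        μ (radialCone v η ∩ closedBall 0 1) := by
  have hfin : μ (radialCone v η ∩ closedBall 0 1) ≠ ⊤ :=
    (measure_mono inter_subset_right).trans_lt measure_closedBall_lt_top |>.ne
  rw [inter_sdiff_distrib_left, measure_sdiff (inter_subset_inter_right _
    (closedBall_subset_closedBall hab)) ((measurableSet_radialCone v η).inter
    measurableSet_closedBall).nullMeasurableSet, addHaar_radialCone_inter_closedBall μ v η ha,
    addHaar_radialCone_inter_closedBall μ v η (ha.trans_le hab), ← ENNReal.sub_mul
    fun _ _ => hfin, ENNReal.ofReal_sub _ (by positivity)]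
  rw [addHaar_radialCone_inter_closedBall μ v η ha]
  exact ENNReal.mul_ne_top ENNReal.ofReal_ne_top hfin

lemma addHaar_closedBall_diff_ball [Nontrivial E] (x : E) {a b : ℝ} (ha : 0 ≤ a) (hab : a ≤ b) :
    μ (closedBall x b \ ball x a) =
      ENNReal.ofReal (b ^ finrank ℝ E - a ^ finrank ℝ E) * μ (ball 0 1) := by
  rw [measure_sdiff (ball_subset_closedBall.trans (closedBall_subset_closedBall hab))
    measurableSet_ball.nullMeasurableSet measure_ball_lt_top.ne, addHaar_closedBall μ x
    (ha.trans hab), addHaar_ball μ x ha, ← ENNReal.sub_mul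
    fun _ _ => measure_ball_lt_top.ne, ENNReal.ofReal_sub _ (by positivity)]

end Cone

local notation "ℝ³" => EuclideanSpace ℝ (Fin 3)

lemma measurableSet_fermiAnnulus (μ δ : ℝ) : MeasurableSet (fermiAnnulus μ δ) :=
  measurableSet_le (by fun_prop) measurable_const

lemma fermiAnnulus_subset_closedBall_diff_ball (μ δ : ℝ) :
    fermiAnnulus μ δ ⊆ closedBall 0 (√μ + δ) \ ball 0 (√μ - δ) := fun k hk => by
  rw [fermiAnnulus, mem_ofPred_eq, abs_le] at hk
  simp only [mem_sdiff, mem_closedBall, mem_ball, dist_zero_right, not_lt]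
  constructor <;> linarith

lemma volume_fermiAnnulus_le {μ δ : ℝ} (hμ : 0 ≤ μ) (hδ : 0 ≤ δ) (hδμ : δ ≤ √μ) :
    volume (fermiAnnulus μ δ) ≤ ENNReal.ofReal (8 * μ * volume.real (ball (0 : ℝ³) 1) * δ) := by
  calc volume (fermiAnnulus μ δ) ≤ volume (closedBall (0 : ℝ³) (√μ + δ) \ ball 0 (√μ - δ)) :=
        measure_mono (fermiAnnulus_subset_closedBall_diff_ball μ δ)
    _ = ENNReal.ofReal ((√μ + δ) ^ 3 - (√μ - δ) ^ 3) * volume (ball (0 : ℝ³) 1) := by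
        rw [addHaar_closedBall_diff_ball _ _ (sub_nonneg.mpr hδμ) (by linarith),
          finrank_euclideanSpace_fin]
    _ ≤ _ := by
        rw [mul_right_comm, ENNReal.ofReal_mul' measureReal_nonneg,
          ofReal_measureReal measure_ball_lt_top.ne]
        gcongr
        nlinarith [Real.sq_sqrt hμ, mul_nonneg (mul_nonneg hδ (sub_nonneg.mpr hδμ))
          (add_nonneg (Real.sqrt_nonneg μ) hδ)]

lemma ofReal_mul_le_volume_radialCone_inter_fermiAnnulus {μ δ η : ℝ} {k₀ : ℝ³}
    (hδ : 0 < δ) (hδμ : δ < √μ) :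
    ENNReal.ofReal (μ * δ) * volume (radialCone k₀ η ∩ closedBall 0 1) ≤
      volume (radialCone k₀ η ∩ fermiAnnulus μ δ) := by
  have hμ : 0 ≤ μ := Real.sqrt_pos.mp (hδ.trans hδμ) |>.le
  calc _ ≤ ENNReal.ofReal (√μ ^ 3 - (√μ - δ) ^ 3) * volume (radialCone k₀ η ∩ closedBall 0 1) := by
        gcongr
        nlinarith [Real.sq_sqrt hμ, mul_pos hδ (sub_pos.mpr hδμ)]
    _ = volume (radialCone k₀ η ∩ (closedBall 0 √μ \ closedBall 0 (√μ - δ))) := by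
        rw [addHaar_radialCone_inter_closedBall_diff _ _ _ (sub_pos.mpr hδμ) (by linarith),
          finrank_euclideanSpace_fin]
    _ ≤ _ := by
        refine measure_mono (inter_subset_inter_right _ fun k ⟨hk, hk'⟩ => ?_)
        simp only [mem_closedBall, dist_zero_right, not_le] at hk hk'
        rw [fermiAnnulus, mem_ofPred_eq, abs_le]
        constructor <;> linarith

lemma radialCone_inter_fermiAnnulus_subset_ball {μ δ ε : ℝ} {k₀ : ℝ³} (hk₀ : ‖k₀‖ = √μ)
    (hδε : δ < ε / 2) : radialCone k₀ (ε / 2) ∩ fermiAnnulus μ δ ⊆ ball k₀ ε := by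
  have hΩ : fermiAnnulus μ δ = {k | |‖k‖ - ‖k₀‖| ≤ δ} := by rw [hk₀]; rfl
  rw [hΩ]
  exact (radialCone_inter_subset_closedBall k₀ (ε / 2) δ).trans
    (closedBall_subset_ball (by linarith))

lemma Continuous.exists_bound_on_fermiAnnulus {F : Type*} [NormedAddCommGroup F] {f : ℝ³ → F}
    (hf : Continuous f) (μ : ℝ) :
    ∃ B ≥ 0, ∀ δ ≤ √μ, ∀ k ∈ fermiAnnulus μ δ, ‖f k‖ ≤ B := by
  obtain ⟨B, hB⟩ :=
    (isCompact_closedBall (0 : ℝ³) (2 * √μ)).exists_bound_of_continuousOn hf.continuousOn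
  refine ⟨max B 0, le_max_right _ _, fun δ hδ k hk => (hB k ?_).trans (le_max_left _ _)⟩
  exact closedBall_subset_closedBall (by linarith)
    (fermiAnnulus_subset_closedBall_diff_ball μ δ hk).1

lemma exists_mul_le_setIntegral_norm_sq_fermiAnnulus {F : Type*} [NormedAddCommGroup F]
    {μ : ℝ} (hμ : 0 < μ) {f : ℝ³ → F} (hf : Continuous f) {k₀ : ℝ³} (hk₀ : ‖k₀‖ = √μ)
    (hfk₀ : 0 < ‖f k₀‖) :
    ∃ c > 0, ∃ δ₀ ∈ Ioc 0 √μ, ∀ δ ∈ Ioc 0 δ₀, c * δ ≤ ∫ k in fermiAnnulus μ δ, ‖f k‖ ^ 2 := by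
  have hR : 0 < √μ := Real.sqrt_pos.mpr hμ
  obtain ⟨ε, hε, hball⟩ : ∃ ε > 0, ball k₀ ε ⊆ {k | ‖f k₀‖ / 2 < ‖f k‖} :=
    Metric.mem_nhds_iff.mp <| hf.norm.continuousAt.preimage_mem_nhds <|
      Ioi_mem_nhds (half_lt_self hfk₀)
  set C := radialCone k₀ (ε / 2)
  have hV := addHaar_radialCone_inter_closedBall_one_pos volume k₀ (half_pos hε)
  have hVfin : volume (C ∩ closedBall 0 1) ≠ ⊤ :=
    ((measure_mono inter_subset_right).trans_lt measure_closedBall_lt_top).ne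
  refine ⟨(‖f k₀‖ / 2) ^ 2 * (μ * volume.real (C ∩ closedBall 0 1)),
    by have := ENNReal.toReal_pos hV.ne' hVfin; positivity,
    min (√μ / 2) (ε / 4), ⟨by positivity, (min_le_left _ _).trans (half_le_self hR.le)⟩, ?_⟩
  rintro δ ⟨hδ, hδδ₀⟩
  set Ω := fermiAnnulus μ δ
  have hδμ : δ < √μ := hδδ₀.trans_lt ((min_le_left _ _).trans_lt (half_lt_self hR))
  have hCΩ : C ∩ Ω ⊆ ball k₀ ε :=
    radialCone_inter_fermiAnnulus_subset_ball hk₀ (by linarith [min_le_right (√μ / 2) (ε / 4)])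
  have hΩfin : volume (C ∩ Ω) ≠ ⊤ := ((measure_mono (hCΩ.trans ball_subset_closedBall)).trans_lt
    measure_closedBall_lt_top).ne
  have hvol : μ * δ * volume.real (C ∩ closedBall 0 1) ≤ volume.real (C ∩ Ω) := by
    have := ENNReal.toReal_mono hΩfin
      (ofReal_mul_le_volume_radialCone_inter_fermiAnnulus (η := ε / 2) (k₀ := k₀) hδ hδμ)
    rwa [ENNReal.toReal_mul, ENNReal.toReal_ofReal (by positivity)] at this
  have hint : IntegrableOn (fun k => ‖f k‖ ^ 2) Ω :=
    ((hf.norm.pow 2).continuousOn.integrableOn_compact (isCompact_closedBall 0 (√μ + δ))).mono_set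
      ((fermiAnnulus_subset_closedBall_diff_ball μ δ).trans sdiff_subset)
  calc _ = (‖f k₀‖ / 2) ^ 2 * (μ * δ * volume.real (C ∩ closedBall 0 1)) := by ring
    _ ≤ (‖f k₀‖ / 2) ^ 2 * volume.real (C ∩ Ω) := by gcongr
    _ ≤ ∫ k in C ∩ Ω, ‖f k‖ ^ 2 :=
        setIntegral_ge_of_const_le_real ((measurableSet_radialCone _ _).inter
          (measurableSet_fermiAnnulus μ δ)) hΩfin
          (fun k hk => pow_le_pow_left₀ (by positivity) (hball (hCΩ hk)).le 2)
          (hint.mono_set inter_subset_right)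
    _ ≤ ∫ k in Ω, ‖f k‖ ^ 2 :=
        setIntegral_mono_set hint (ae_of_all _ fun _ => by positivity)
          inter_subset_right.eventuallyLE

theorem annulus_integral_pair_density_lower_bound_general (μ : ℝ) (hμ : 0 < μ)
    (f : EuclideanSpace ℝ (Fin 3) → ℂ) (hf : Continuous f)
    (k₀ : EuclideanSpace ℝ (Fin 3)) (hk₀ : ‖k₀‖ = Real.sqrt μ) (hfk₀ : 0 < ‖f k₀‖) :
    ∃ c > 0, ∃ C > 0, ∃ δ₀ ∈ Set.Ioc (0 : ℝ) (Real.sqrt μ), ∀ δ : ℝ, δ ∈ Set.Ioc 0 δ₀ →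
      ∀ h : ℝ, 0 < h → ∀ M : ℝ, 1 ≤ M →
      ∀ ψ ψ₀ : ℂ, ‖ψ‖ ≤ M → ‖ψ₀‖ ≤ M →
      ∀ ξ ξ₀ : EuclideanSpace ℝ (Fin 3) → ℂ,
      MemLp ξ 2 volume → MemLp ξ₀ 2 volume →
      eLpNorm ξ 2 volume ≤ ENNReal.ofReal (M * h ^ 2) →
      eLpNorm ξ₀ 2 volume ≤ ENNReal.ofReal (M * h ^ 2) →
      c * h ^ 2 * δ * |‖ψ‖ ^ 2 - ‖ψ₀‖ ^ 2| - C * M ^ 2 * (h ^ 3 * δ ^ ((1 : ℝ) / 2) + h ^ 4) ≤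
        ∫ k in fermiAnnulus μ δ,
          |‖(h : ℂ) * ψ * f k + ξ k‖ ^ 2 - ‖(h : ℂ) * ψ₀ * f k + ξ₀ k‖ ^ 2| := by
  obtain ⟨c, hc, δ₀, hδ₀, hf_lower⟩ :=
    exists_mul_le_setIntegral_norm_sq_fermiAnnulus hμ hf hk₀ hfk₀
  obtain ⟨B, hB₀, hB⟩ := hf.exists_bound_on_fermiAnnulus μ
  set K := 8 * μ * volume.real (ball (0 : ℝ³) 1)
  refine ⟨c, hc, 4 * B * √K + 2, by positivity, δ₀, hδ₀, ?_⟩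
  rintro δ ⟨hδ, hδδ₀⟩ h hh M hM ψ ψ₀ hψ hψ₀ ξ ξ₀ hξ hξ₀ hξM hξ₀M
  have hδμ : δ ≤ √μ := hδδ₀.trans hδ₀.2
  have hhψ : ∀ φ : ℂ, ‖(h : ℂ) * φ‖ = h * ‖φ‖ := fun φ => by
    rw [norm_mul, Complex.norm_real, Real.norm_of_nonneg hh.le]
  have key := setIntegral_abs_norm_mul_add_sq_sub_norm_mul_add_sq_ge (A := h * M)
    (measurableSet_fermiAnnulus μ δ) (by positivity) (volume_fermiAnnulus_le hμ.le hδ.le hδμ)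
    hf.aestronglyMeasurable hB₀ (hB δ hδμ) ((hhψ ψ).trans_le (by gcongr))
    ((hhψ ψ₀).trans_le (by gcongr)) (by positivity) hξ hξ₀ hξM hξ₀M
  rw [hhψ, hhψ, mul_pow, mul_pow, ← mul_sub, abs_mul, abs_of_nonneg (sq_nonneg h),
    Real.sqrt_mul (by positivity)] at key
  have hmain : h ^ 2 * |‖ψ‖ ^ 2 - ‖ψ₀‖ ^ 2| * (c * δ) ≤
      h ^ 2 * |‖ψ‖ ^ 2 - ‖ψ₀‖ ^ 2| * ∫ k in fermiAnnulus μ δ, ‖f k‖ ^ 2 := by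
    gcongr; exact hf_lower δ ⟨hδ, hδδ₀⟩
  have hslack : 0 ≤ 2 * M ^ 2 * h ^ 3 * √δ + 4 * B * √K * M ^ 2 * h ^ 4 := by positivity
  rw [← Real.sqrt_eq_rpow]
  linear_combination key + hmain + hslack

/-- Lower bound for the integral over the Fermi annulus `Ω_δ` of the difference of the
squared moduli of the pair densities `hψf + ξ` and `hψ₀f + ξ₀`. -/
theorem annulus_integral_pair_density_lower_bound (μ : ℝ) (hμ : 0 < μ)
    (f : EuclideanSpace ℝ (Fin 3) → ℂ) (hf : Continuous f) (B : ℝ) (hB : ∀ k, ‖f k‖ ≤ B)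
    (k₀ : EuclideanSpace ℝ (Fin 3)) (hk₀ : ‖k₀‖ = Real.sqrt μ) (hfk₀ : 0 < ‖f k₀‖) :
    ∃ c > 0, ∃ C > 0, ∃ δ₀ ∈ Set.Ioc (0 : ℝ) (Real.sqrt μ), ∀ δ : ℝ, δ ∈ Set.Ioc 0 δ₀ →
      ∀ h : ℝ, 0 < h → ∀ M : ℝ, 1 ≤ M →
      ∀ ψ ψ₀ : ℂ, ‖ψ‖ ≤ M → ‖ψ₀‖ ≤ M →
      ∀ ξ ξ₀ : EuclideanSpace ℝ (Fin 3) → ℂ,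
      MemLp ξ 2 volume → MemLp ξ₀ 2 volume →
      eLpNorm ξ 2 volume ≤ ENNReal.ofReal (M * h ^ 2) →
      eLpNorm ξ₀ 2 volume ≤ ENNReal.ofReal (M * h ^ 2) →
      c * h ^ 2 * δ * |‖ψ‖ ^ 2 - ‖ψ₀‖ ^ 2| - C * M ^ 2 * (h ^ 3 * δ ^ ((1 : ℝ) / 2) + h ^ 4) ≤
        ∫ k in fermiAnnulus μ δ,
          |‖(h : ℂ) * ψ * f k + ξ k‖ ^ 2 - ‖(h : ℂ) * ψ₀ * f k + ξ₀ k‖ ^ 2| :=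
  annulus_integral_pair_density_lower_bound_general μ hμ f hf k₀ hk₀ hfk₀
end
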